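/- arXiv:2206.07659 — 4 statements merged into one kernel-verified Lean document; each statement's English description precedes it below -/
import Mathlib

section
/- Let r be a random variable with values in [0,1] and mean R⋆ = E[r], and let R ∈ [0,1] and η > 0. Then E[exp(−3η·((R − r)² − (R⋆ − r)²))] ≤ exp(−(3η − 4.5η²)·(R − R⋆)²). -/
open MeasureTheory Real

lemma hoeff_scalar (p : ℝ) (hp0 : 0 ≤ p) (hp1 : p ≤ 1) (t : ℝ) :
    1 - p + p * Real.exp t ≤ Real.exp (p * t + t ^ 2 / 8) := by
  have hD : ∀ s : ℝ, 0 < 1 - p + p * Real.exp s := by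
    intro s
    rcases eq_or_lt_of_le hp0 with h | h
    · simp [← h]
    · nlinarith [Real.exp_pos s, mul_pos h (Real.exp_pos s)]
  set h : ℝ → ℝ := fun s => p * s + s ^ 2 / 8 - Real.log (1 - p + p * Real.exp s) with hh
  set g : ℝ → ℝ := fun s => p + s / 4 - p * Real.exp s / (1 - p + p * Real.exp s) with hg
  have hDen : ∀ s : ℝ, HasDerivAt (fun u : ℝ => 1 - p + p * Real.exp u) (p * Real.exp s) s := by
    intro s
    simpa using ((Real.hasDerivAt_exp s).const_mul p).const_add (1 - p)
  have hdh : ∀ s, HasDerivAt h (g s) s := by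
    intro s
    have h2 := (hDen s).log (hD s).ne'
    have h3 : HasDerivAt (fun u : ℝ => p * u + u ^ 2 / 8) (p + s / 4) s := by
      have h4 := ((hasDerivAt_id s).const_mul p).add ((hasDerivAt_pow 2 s).div_const 8)
      exact h4.congr_deriv (by norm_num; ring)
    exact h3.sub h2
  have hdg : ∀ s, HasDerivAt g
      (1 / 4 - (p * Real.exp s * (1 - p)) / (1 - p + p * Real.exp s) ^ 2) s := by
    intro s
    have hnum : HasDerivAt (fun u : ℝ => p * Real.exp u) (p * Real.exp s) s :=
      (Real.hasDerivAt_exp s).const_mul p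
    have hdiv := hnum.div (hDen s) (hD s).ne'
    have h3 : HasDerivAt (fun u : ℝ => p + u / 4) (1 / 4) s := by
      simpa using ((hasDerivAt_id s).div_const 4).const_add p
    have := h3.sub hdiv
    refine this.congr_deriv ?_
    have hne := (hD s).ne'
    field_simp
    ring
  have hg_nonneg : ∀ s : ℝ, 0 ≤ 1 / 4 - (p * Real.exp s * (1 - p)) / (1 - p + p * Real.exp s) ^ 2 := by
    intro s
    rw [sub_nonneg, div_le_iff₀ (pow_pos (hD s) 2)]
    nlinarith [sq_nonneg ((1 - p) - p * Real.exp s)]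
  have hg_mono : Monotone g :=
    monotone_of_deriv_nonneg (fun s => (hdg s).differentiableAt)
      (fun s => by rw [(hdg s).deriv]; exact hg_nonneg s)
  have hg0 : g 0 = 0 := by simp [hg]
  have hh0 : h 0 = 0 := by simp [hh]
  have hdiff : Differentiable ℝ h := fun s => (hdh s).differentiableAt
  have hkey : ∀ s : ℝ, 0 ≤ h s := by
    intro s
    rcases le_total 0 s with hs | hs
    · have hmono : MonotoneOn h (Set.Ici (0 : ℝ)) := by
        apply monotoneOn_of_deriv_nonneg (convex_Ici 0) hdiff.continuous.continuousOn
          hdiff.differentiableOn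
        intro x hx
        rw [(hdh x).deriv]
        rw [interior_Ici] at hx
        have := hg_mono (le_of_lt hx)
        rw [hg0] at this; exact this
      have := hmono (Set.self_mem_Ici) (Set.mem_Ici.2 hs) hs
      rwa [hh0] at this
    · have hanti : AntitoneOn h (Set.Iic (0 : ℝ)) := by
        apply antitoneOn_of_deriv_nonpos (convex_Iic 0) hdiff.continuous.continuousOn
          hdiff.differentiableOn
        intro x hx
        rw [(hdh x).deriv]
        rw [interior_Iic] at hx
        have := hg_mono (le_of_lt hx)
        rw [hg0] at this; exact this
      have := hanti (Set.mem_Iic.2 hs) Set.self_mem_Iic hs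
      rwa [hh0] at this
    
  have := hkey t
  have hlog : Real.log (1 - p + p * Real.exp t) ≤ p * t + t ^ 2 / 8 := by
    simp only [hh] at this; linarith
  calc 1 - p + p * Real.exp t = Real.exp (Real.log (1 - p + p * Real.exp t)) :=
        (Real.exp_log (hD t)).symm
    _ ≤ Real.exp (p * t + t ^ 2 / 8) := Real.exp_le_exp.2 hlog

/-- Single-model MGF bound for squared-loss likelihood ratios (core of the paper's Lemma 5):
for a random variable `r` with values in `[0,1]` and mean `R⋆`, any `R ∈ [0,1]` and `η > 0`,
`E[exp (−3η((R−r)² − (R⋆−r)²))] ≤ exp (−(3η − 4.5η²)(R−R⋆)²)`. -/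
theorem stmt4 {Ω : Type*} [MeasurableSpace Ω] (P : Measure Ω) [IsProbabilityMeasure P]
    (r : Ω → ℝ) (hr : Measurable r) (hr01 : ∀ ω, r ω ∈ Set.Icc (0 : ℝ) 1)
    (Rstar : ℝ) (hRstar : Rstar = ∫ ω, r ω ∂P)
    (R : ℝ) (hR : R ∈ Set.Icc (0 : ℝ) 1) (η : ℝ) (hη : 0 < η) :
    ∫ ω, Real.exp (-3 * η * ((R - r ω) ^ 2 - (Rstar - r ω) ^ 2)) ∂P ≤
      Real.exp (-(3 * η - 4.5 * η ^ 2) * (R - Rstar) ^ 2) := by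
  set Δ : ℝ := R - Rstar with hΔ
  set t : ℝ := 6 * η * Δ with ht
  -- integrability of r
  have hr_int : Integrable r P := by
    refine ⟨hr.aestronglyMeasurable, HasFiniteIntegral.of_bounded (C := 1) ?_⟩
    filter_upwards with ω
    rw [Real.norm_eq_abs, abs_le]
    exact ⟨by linarith [(hr01 ω).1], (hr01 ω).2⟩
  -- mean in [0,1]
  have hμ0 : 0 ≤ Rstar := by
    rw [hRstar]; exact integral_nonneg fun ω => (hr01 ω).1
  have hμ1 : Rstar ≤ 1 := by
    rw [hRstar]
    calc ∫ ω, r ω ∂P ≤ ∫ _ω, (1 : ℝ) ∂P := integral_mono hr_int (integrable_const 1)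
          fun ω => (hr01 ω).2
      _ = 1 := by simp
  -- rewrite the integrand
  have hsplit : ∀ ω, Real.exp (-3 * η * ((R - r ω) ^ 2 - (Rstar - r ω) ^ 2)) =
      Real.exp (-3 * η * Δ ^ 2) * (Real.exp (-(t * Rstar)) * Real.exp (t * r ω)) := by
    intro ω
    rw [← Real.exp_add, ← Real.exp_add]
    congr 1
    simp only [hΔ, ht]
    ring
  simp_rw [hsplit]
  -- integrability of exp (t * r)
  have hexp_meas : Measurable fun ω => Real.exp (t * r ω) :=
    Real.measurable_exp.comp (hr.const_mul t)
  have hexp_int : Integrable (fun ω => Real.exp (t * r ω)) P := by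
    refine ⟨hexp_meas.aestronglyMeasurable, HasFiniteIntegral.of_bounded (C := Real.exp |t|) ?_⟩
    filter_upwards with ω
    rw [Real.norm_eq_abs, abs_of_pos (Real.exp_pos _), Real.exp_le_exp]
    calc t * r ω ≤ |t * r ω| := le_abs_self _
      _ = |t| * |r ω| := abs_mul _ _
      _ ≤ |t| * 1 := by
          apply mul_le_mul_of_nonneg_left _ (abs_nonneg t)
          rw [abs_le]; exact ⟨by linarith [(hr01 ω).1], (hr01 ω).2⟩
      _ = |t| := mul_one _
  -- pointwise convexity bound : exp (t * x) ≤ (1 - x) + x * exp t for x ∈ [0,1]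
  have hconv : ∀ ω, Real.exp (t * r ω) ≤ (1 - r ω) + r ω * Real.exp t := by
    intro ω
    obtain ⟨hx0, hx1⟩ := hr01 ω
    have := convexOn_exp.2 (Set.mem_univ (0 : ℝ)) (Set.mem_univ t)
      (by linarith : 0 ≤ 1 - r ω) hx0 (by ring : (1 - r ω) + r ω = 1)
    simpa [smul_eq_mul, mul_comm] using this
  have hrhs_int : Integrable (fun ω => (1 - r ω) + r ω * Real.exp t) P :=
    ((integrable_const (1 : ℝ)).sub hr_int).add (hr_int.mul_const _)
  have hIbound : ∫ ω, Real.exp (t * r ω) ∂P ≤ 1 - Rstar + Rstar * Real.exp t := by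
    calc ∫ ω, Real.exp (t * r ω) ∂P ≤ ∫ ω, ((1 - r ω) + r ω * Real.exp t) ∂P :=
          integral_mono hexp_int hrhs_int hconv
      _ = 1 - Rstar + Rstar * Real.exp t := by
          have h1 : Integrable (fun ω => 1 - r ω) P := (integrable_const 1).sub hr_int
          have h2 : Integrable (fun ω => r ω * Real.exp t) P := hr_int.mul_const _
          rw [integral_add h1 h2, integral_sub (integrable_const 1) hr_int,
            integral_mul_const, integral_const]
          simp [hRstar]
  -- put things together
  rw [integral_const_mul, integral_const_mul]
  have hfinal : 1 - Rstar + Rstar * Real.exp t ≤ Real.exp (Rstar * t + t ^ 2 / 8) :=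
    hoeff_scalar Rstar hμ0 hμ1 t
  have hInonneg : (0:ℝ) ≤ ∫ ω, Real.exp (t * r ω) ∂P :=
    integral_nonneg fun ω => (Real.exp_pos _).le
  calc Real.exp (-3 * η * Δ ^ 2) * (Real.exp (-(t * Rstar)) * ∫ ω, Real.exp (t * r ω) ∂P)
      ≤ Real.exp (-3 * η * Δ ^ 2) * (Real.exp (-(t * Rstar)) * Real.exp (Rstar * t + t ^ 2 / 8)) := by
        apply mul_le_mul_of_nonneg_left _ (Real.exp_pos _).le
        exact mul_le_mul_of_nonneg_left (hIbound.trans hfinal) (Real.exp_pos _).le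
    _ = Real.exp (-(3 * η - 4.5 * η ^ 2) * (R - Rstar) ^ 2) := by
        rw [← Real.exp_add, ← Real.exp_add]
        congr 1
        simp only [ht, hΔ]
        ring
end

section
/- Let P and Q be probability measures on a measurable space X and let R_P, R_Q be real numbers. Then for every measurable function g : X → [0,1], ( R_Q + ∫_X g dQ − R_P − ∫_X g dP )² ≤ 4·( H²(P, Q) + (R_Q − R_P)² ). In particular the same bound holds for the supremum over all measurable g : X → [0,1] of the left-hand side. -/
open MeasureTheory Real

/-- The paper's Lemma (ipm-to-hellinger): for probability measures `P, Q` on `X`,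
reals `R_P, R_Q`, and every measurable `g : X → [0,1]`,
`(R_Q + ∫ g dQ − R_P − ∫ g dP)² ≤ 4·(H²(P,Q) + (R_Q − R_P)²)`, where the squared
Hellinger distance is computed with the dominating measure `P + Q`; in particular the
same bound holds for the supremum of the left-hand side over all such `g`. -/
theorem stmt8 {X : Type*} [MeasurableSpace X] (P Q : Measure X)
    [IsProbabilityMeasure P] [IsProbabilityMeasure Q] (RP RQ : ℝ) :
    (∀ g : X → ℝ, Measurable g → (∀ x, g x ∈ Set.Icc (0 : ℝ) 1) →
      (RQ + ∫ x, g x ∂Q - RP - ∫ x, g x ∂P) ^ 2 ≤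
        4 * ((∫ x, (Real.sqrt ((P.rnDeriv (P + Q) x).toReal) -
              Real.sqrt ((Q.rnDeriv (P + Q) x).toReal)) ^ 2 ∂(P + Q)) +
            (RQ - RP) ^ 2)) ∧
    sSup {y : ℝ | ∃ g : X → ℝ, Measurable g ∧ (∀ x, g x ∈ Set.Icc (0 : ℝ) 1) ∧
        y = (RQ + ∫ x, g x ∂Q - RP - ∫ x, g x ∂P) ^ 2} ≤
      4 * ((∫ x, (Real.sqrt ((P.rnDeriv (P + Q) x).toReal) -
            Real.sqrt ((Q.rnDeriv (P + Q) x).toReal)) ^ 2 ∂(P + Q)) +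
          (RQ - RP) ^ 2) := by
  classical
  set μ : Measure X := P + Q with hμdef
  set p : X → ℝ := fun x => (P.rnDeriv μ x).toReal with hpdef
  set q : X → ℝ := fun x => (Q.rnDeriv μ x).toReal with hqdef
  have hPμ : P ≪ μ := Measure.absolutelyContinuous_of_le (Measure.le_add_right le_rfl)
  have hQμ : Q ≪ μ := Measure.absolutelyContinuous_of_le (Measure.le_add_left le_rfl)
  have hpm : Measurable p := (Measure.measurable_rnDeriv P μ).ennreal_toReal
  have hqm : Measurable q := (Measure.measurable_rnDeriv Q μ).ennreal_toReal
  have hp0 : ∀ x, 0 ≤ p x := fun x => ENNReal.toReal_nonneg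
  have hq0 : ∀ x, 0 ≤ q x := fun x => ENNReal.toReal_nonneg
  have hpint : Integrable p μ := Measure.integrable_toReal_rnDeriv
  have hqint : Integrable q μ := Measure.integrable_toReal_rnDeriv
  have hp1 : ∫ x, p x ∂μ = 1 := by
    rw [hpdef, Measure.integral_toReal_rnDeriv hPμ]; simp
  have hq1 : ∫ x, q x ∂μ = 1 := by
    rw [hqdef, Measure.integral_toReal_rnDeriv hQμ]; simp
  -- Hellinger term
  set Hsq : ℝ := ∫ x, (Real.sqrt (p x) - Real.sqrt (q x)) ^ 2 ∂μ with hHdef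
  have hH0 : 0 ≤ Hsq := integral_nonneg fun x => sq_nonneg _
  -- the key bound for a single g
  have key : ∀ g : X → ℝ, Measurable g → (∀ x, g x ∈ Set.Icc (0 : ℝ) 1) →
      ((∫ x, g x ∂Q) - ∫ x, g x ∂P) ^ 2 ≤ Hsq := by
    intro g hg hg01
    have hgabs : ∀ x, |g x - 1 / 2| ≤ 1 / 2 := by
      intro x
      have h := hg01 x
      rw [Set.mem_Icc] at h
      rw [abs_le]; constructor <;> linarith [h.1, h.2]
    -- transfer integrals to μ
    have hIP : ∫ x, g x ∂P = ∫ x, p x * g x ∂μ := by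
      rw [← integral_rnDeriv_smul hPμ (f := g)]
      simp [hpdef, smul_eq_mul]
    have hIQ : ∫ x, g x ∂Q = ∫ x, q x * g x ∂μ := by
      rw [← integral_rnDeriv_smul hQμ (f := g)]
      simp [hqdef, smul_eq_mul]
    -- integrability of products
    have hint_pg : Integrable (fun x => p x * g x) μ := by
      refine hpint.mono ((hpm.mul hg).aestronglyMeasurable)
        (Filter.Eventually.of_forall fun x => ?_)
      have h := hg01 x; rw [Set.mem_Icc] at h
      rw [Real.norm_eq_abs, Real.norm_eq_abs, abs_mul, abs_of_nonneg (hp0 x),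
        abs_of_nonneg h.1]
      nlinarith [hp0 x, h.1, h.2]
    have hint_qg : Integrable (fun x => q x * g x) μ := by
      refine hqint.mono ((hqm.mul hg).aestronglyMeasurable)
        (Filter.Eventually.of_forall fun x => ?_)
      have h := hg01 x; rw [Set.mem_Icc] at h
      rw [Real.norm_eq_abs, Real.norm_eq_abs, abs_mul, abs_of_nonneg (hq0 x),
        abs_of_nonneg h.1]
      nlinarith [hq0 x, h.1, h.2]
    -- centering: b = ∫ (g - 1/2)(q - p)
    have hint1 : Integrable (fun x => q x * g x - p x * g x) μ := hint_qg.sub hint_pg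
    have hint2 : Integrable (fun x => 1 / 2 * q x - 1 / 2 * p x) μ :=
      (hqint.const_mul (1 / 2)).sub (hpint.const_mul (1 / 2))
    have hb : (∫ x, g x ∂Q) - ∫ x, g x ∂P
        = ∫ x, (g x - 1 / 2) * (q x - p x) ∂μ := by
      have e1 : (fun x => (g x - 1 / 2) * (q x - p x))
          = fun x => (q x * g x - p x * g x) - (1 / 2 * q x - 1 / 2 * p x) :=
        funext fun x => by ring
      rw [hIQ, hIP, e1, integral_sub hint1 hint2,
        integral_sub hint_qg hint_pg,
        integral_sub (hqint.const_mul (1 / 2)) (hpint.const_mul (1 / 2)),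
        integral_const_mul, integral_const_mul, hp1, hq1]
      ring
    -- Cauchy–Schwarz setup
    set u : X → ℝ := fun x => |g x - 1 / 2| * (Real.sqrt (q x) + Real.sqrt (p x)) with hudef
    set v : X → ℝ := fun x => |Real.sqrt (q x) - Real.sqrt (p x)| with hvdef
    have hum : Measurable u :=
      ((hg.sub measurable_const).abs).mul ((hqm.sqrt).add (hpm.sqrt))
    have hvm : Measurable v := ((hqm.sqrt).sub (hpm.sqrt)).abs
    have hu0 : ∀ x, 0 ≤ u x := fun x =>
      mul_nonneg (abs_nonneg _) (by positivity)
    have hv0 : ∀ x, 0 ≤ v x := fun x => abs_nonneg _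
    have hdom : Integrable (fun x => 2 * (p x + q x)) μ := (hpint.add hqint).const_mul 2
    have hu2le : ∀ x, u x ^ 2 ≤ (p x + q x) / 2 := by
      intro x
      have hsp : Real.sqrt (p x) ^ 2 = p x := Real.sq_sqrt (hp0 x)
      have hsq : Real.sqrt (q x) ^ 2 = q x := Real.sq_sqrt (hq0 x)
      have h14 : (g x - 1 / 2) ^ 2 ≤ 1 / 4 := by
        have h := hg01 x; rw [Set.mem_Icc] at h; nlinarith [h.1, h.2]
      simp only [hudef]
      rw [mul_pow, sq_abs]
      nlinarith [sq_nonneg (Real.sqrt (q x) - Real.sqrt (p x)),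
        sq_nonneg (Real.sqrt (q x) + Real.sqrt (p x)), h14,
        sq_nonneg (g x - 1 / 2)]
    have hv2le : ∀ x, v x ^ 2 ≤ 2 * (p x + q x) := by
      intro x
      have hsp : Real.sqrt (p x) ^ 2 = p x := Real.sq_sqrt (hp0 x)
      have hsq : Real.sqrt (q x) ^ 2 = q x := Real.sq_sqrt (hq0 x)
      simp only [hvdef]
      rw [sq_abs]
      nlinarith [sq_nonneg (Real.sqrt (q x) + Real.sqrt (p x))]
    have hu2int : Integrable (fun x => u x ^ 2) μ := by
      refine hdom.mono ((hum.pow_const 2).aestronglyMeasurable)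
        (Filter.Eventually.of_forall fun x => ?_)
      rw [Real.norm_eq_abs, Real.norm_eq_abs, abs_of_nonneg (sq_nonneg _),
        abs_of_nonneg (by linarith [hp0 x, hq0 x] : (0:ℝ) ≤ 2 * (p x + q x))]
      linarith [hu2le x, hp0 x, hq0 x]
    have hv2int : Integrable (fun x => v x ^ 2) μ := by
      refine hdom.mono ((hvm.pow_const 2).aestronglyMeasurable)
        (Filter.Eventually.of_forall fun x => ?_)
      rw [Real.norm_eq_abs, Real.norm_eq_abs, abs_of_nonneg (sq_nonneg _),
        abs_of_nonneg (by linarith [hp0 x, hq0 x] : (0:ℝ) ≤ 2 * (p x + q x))]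
      exact hv2le x
    have humem : MemLp u (ENNReal.ofReal 2) μ := by
      rw [show ENNReal.ofReal 2 = 2 by simp]
      exact (memLp_two_iff_integrable_sq hum.aestronglyMeasurable).2 hu2int
    have hvmem : MemLp v (ENNReal.ofReal 2) μ := by
      rw [show ENNReal.ofReal 2 = 2 by simp]
      exact (memLp_two_iff_integrable_sq hvm.aestronglyMeasurable).2 hv2int
    have hCS : ∫ x, u x * v x ∂μ
        ≤ (∫ x, u x ^ (2:ℝ) ∂μ) ^ (1 / (2:ℝ)) * (∫ x, v x ^ (2:ℝ) ∂μ) ^ (1 / (2:ℝ)) :=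
      integral_mul_le_Lp_mul_Lq_of_nonneg (Real.holderConjugate_iff.mpr ⟨one_lt_two, by norm_num⟩ : Real.HolderConjugate 2 2)
        (Filter.Eventually.of_forall hu0) (Filter.Eventually.of_forall hv0) humem hvmem
    simp only [Real.rpow_two] at hCS
    rw [← Real.sqrt_eq_rpow, ← Real.sqrt_eq_rpow] at hCS
    set A : ℝ := ∫ x, u x ^ 2 ∂μ with hAdef
    set B : ℝ := ∫ x, v x ^ 2 ∂μ with hBdef
    have hA0 : 0 ≤ A := integral_nonneg fun x => sq_nonneg _
    have hB0 : 0 ≤ B := integral_nonneg fun x => sq_nonneg _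
    have hA1 : A ≤ 1 := by
      have : A ≤ ∫ x, (p x + q x) / 2 ∂μ :=
        integral_mono hu2int ((hpint.add hqint).div_const 2) hu2le
      have heq : ∫ x, (p x + q x) / 2 ∂μ = 1 := by
        rw [integral_div, integral_add hpint hqint, hp1, hq1]; norm_num
      linarith
    have hBH : B = Hsq := by
      rw [hBdef, hHdef]
      refine integral_congr_ae (Filter.Eventually.of_forall fun x => ?_)
      simp only [hvdef, sq_abs]
      ring
    -- pointwise |(g - 1/2)(q - p)| = u * v
    have hptw : ∀ x, |(g x - 1 / 2) * (q x - p x)| = u x * v x := by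
      intro x
      have hsp : Real.sqrt (p x) ^ 2 = p x := Real.sq_sqrt (hp0 x)
      have hsq : Real.sqrt (q x) ^ 2 = q x := Real.sq_sqrt (hq0 x)
      have hfact : q x - p x
          = (Real.sqrt (q x) - Real.sqrt (p x)) * (Real.sqrt (q x) + Real.sqrt (p x)) := by
        linear_combination hsp - hsq
      have hadd : (0:ℝ) ≤ Real.sqrt (q x) + Real.sqrt (p x) := by positivity
      rw [abs_mul, hfact, abs_mul, abs_of_nonneg hadd]
      simp only [hudef, hvdef]
      ring
    have habs : |(∫ x, g x ∂Q) - ∫ x, g x ∂P| ≤ Real.sqrt A * Real.sqrt B := by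
      rw [hb]
      calc |∫ x, (g x - 1 / 2) * (q x - p x) ∂μ|
          ≤ ∫ x, |(g x - 1 / 2) * (q x - p x)| ∂μ :=
            norm_integral_le_integral_norm (μ := μ) (fun x => (g x - 1 / 2) * (q x - p x))
        _ = ∫ x, u x * v x ∂μ :=
            integral_congr_ae (Filter.Eventually.of_forall fun x => hptw x)
        _ ≤ Real.sqrt A * Real.sqrt B := hCS
    have hsq2 : ((∫ x, g x ∂Q) - ∫ x, g x ∂P) ^ 2 ≤ A * B := by
      calc ((∫ x, g x ∂Q) - ∫ x, g x ∂P) ^ 2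
          = |(∫ x, g x ∂Q) - ∫ x, g x ∂P| ^ 2 := (sq_abs _).symm
        _ ≤ (Real.sqrt A * Real.sqrt B) ^ 2 := by
            exact pow_le_pow_left₀ (abs_nonneg _) habs 2
        _ = A * B := by rw [mul_pow, Real.sq_sqrt hA0, Real.sq_sqrt hB0]
    calc ((∫ x, g x ∂Q) - ∫ x, g x ∂P) ^ 2 ≤ A * B := hsq2
      _ ≤ 1 * B := by nlinarith [hA1, hB0]
      _ = Hsq := by rw [one_mul, hBH]
  -- conclude
  have main : ∀ g : X → ℝ, Measurable g → (∀ x, g x ∈ Set.Icc (0 : ℝ) 1) →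
      (RQ + ∫ x, g x ∂Q - RP - ∫ x, g x ∂P) ^ 2 ≤ 4 * (Hsq + (RQ - RP) ^ 2) := by
    intro g hg hg01
    have hk := key g hg hg01
    nlinarith [hk, hH0, sq_nonneg ((RQ - RP) - ((∫ x, g x ∂Q) - ∫ x, g x ∂P)),
      sq_nonneg ((RQ - RP) + ((∫ x, g x ∂Q) - ∫ x, g x ∂P)), sq_nonneg (RQ - RP)]
  refine ⟨main, Real.sSup_le ?_ (by nlinarith [hH0, sq_nonneg (RQ - RP)])⟩
  rintro y ⟨g, hg, hg01, rfl⟩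
  exact main g hg hg01
end

section
/- Let (I, p) be a probability space, let ψ : I → ℝ^d and u : I → ℝ^d be bounded measurable maps with ‖u(i)‖₂ ≤ B for all i ∈ I, let Σ = ∫_I ψ(i)ψ(i)ᵀ dp(i), and for λ > 0 set K(λ) = tr((Σ + λ·I_d)⁻¹ Σ). Then ∫_I |⟨ψ(i), u(i)⟩| dp(i) ≤ √( K(λ) · ∫_I ∫_I ⟨u(i), ψ(j)⟩² dp(j) dp(i) ) + B·√( λ·K(λ) ). -/
open MeasureTheory Matrix

open scoped MatrixOrder in
private lemma psd_cs {d : ℕ} {A : Matrix (Fin d) (Fin d) ℝ} (hA : A.PosSemidef)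
    (x y : Fin d → ℝ) : (x ⬝ᵥ (A *ᵥ y))^2 ≤ (x ⬝ᵥ (A *ᵥ x)) * (y ⬝ᵥ (A *ᵥ y)) := by
  obtain ⟨R, hRsymm, hmul⟩ : ∃ R : Matrix (Fin d) (Fin d) ℝ, Rᵀ = R ∧ R * R = A := by
    refine ⟨CFC.sqrt A, ?_, CFC.sqrt_mul_sqrt_self A hA.nonneg⟩
    have h := (CFC.sqrt_nonneg A).isSelfAdjoint
    rw [IsSelfAdjoint, Matrix.star_eq_conjTranspose] at h
    simpa using h
  have key : ∀ z w : Fin d → ℝ, z ⬝ᵥ (A *ᵥ w) = (R *ᵥ z) ⬝ᵥ (R *ᵥ w) := by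
    intro z w
    rw [← hmul, ← Matrix.mulVec_mulVec, dotProduct_mulVec,
      ← Matrix.mulVec_transpose, hRsymm]
  rw [key, key, key]
  have := Finset.sum_mul_sq_le_sq_mul_sq Finset.univ (R *ᵥ x) (R *ᵥ y)
  simpa [dotProduct, sq] using this

private lemma dot_abs_le {d : ℕ} (M : Matrix (Fin d) (Fin d) ℝ) (v w : Fin d → ℝ)
    {Cv Cw : ℝ} (hv : ∀ a, |v a| ≤ Cv) (hw : ∀ a, |w a| ≤ Cw) :
    |v ⬝ᵥ (M *ᵥ w)| ≤ (∑ a, ∑ b, |M a b|) * Cv * Cw := by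
  have h1 : |v ⬝ᵥ (M *ᵥ w)| ≤ ∑ a, ∑ b, |v a| * (|M a b| * |w b|) := by
    rw [dotProduct]
    refine (Finset.abs_sum_le_sum_abs _ _).trans (Finset.sum_le_sum fun a _ => ?_)
    rw [abs_mul, Matrix.mulVec, dotProduct]
    calc |v a| * |∑ b, M a b * w b| ≤ |v a| * ∑ b, |M a b| * |w b| := by
          refine mul_le_mul_of_nonneg_left ?_ (abs_nonneg _)
          refine (Finset.abs_sum_le_sum_abs _ _).trans (Finset.sum_le_sum fun b _ => ?_)
          rw [abs_mul]
      _ = ∑ b, |v a| * (|M a b| * |w b|) := by rw [Finset.mul_sum]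
  refine h1.trans ?_
  have h2 : ∀ a ∈ Finset.univ, ∑ b, |v a| * (|M a b| * |w b|) ≤ ∑ b, |M a b| * Cv * Cw := by
    intro a _
    refine Finset.sum_le_sum fun b _ => ?_
    have hCv : (0:ℝ) ≤ Cv := (abs_nonneg _).trans (hv a)
    have hCw : (0:ℝ) ≤ Cw := (abs_nonneg _).trans (hw b)
    calc |v a| * (|M a b| * |w b|) ≤ Cv * (|M a b| * Cw) := by
          refine mul_le_mul (hv a) (mul_le_mul_of_nonneg_left (hw b) (abs_nonneg _))
            (mul_nonneg (abs_nonneg _) (abs_nonneg _)) hCv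
      _ = |M a b| * Cv * Cw := by ring
  refine (Finset.sum_le_sum h2).trans (le_of_eq ?_)
  rw [Finset.sum_mul, Finset.sum_mul]
  exact Finset.sum_congr rfl fun a _ => by rw [Finset.sum_mul, Finset.sum_mul]

private lemma meas_dot {I : Type*} [MeasurableSpace I] {d : ℕ} {v w : I → Fin d → ℝ}
    (hv : Measurable v) (hw : Measurable w) (M : Matrix (Fin d) (Fin d) ℝ) :
    Measurable fun i => v i ⬝ᵥ (M *ᵥ w i) := by
  simp only [dotProduct, Matrix.mulVec]
  exact Finset.measurable_sum _ fun a _ =>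
    (((measurable_pi_apply a).comp hv).mul <| Finset.measurable_sum _ fun b _ =>
      (measurable_const.mul ((measurable_pi_apply b).comp hw)))

private lemma integrable_of_bdd {I : Type*} [MeasurableSpace I] {p : Measure I}
    [IsFiniteMeasure p] {f : I → ℝ} {C : ℝ} (hm : Measurable f) (hb : ∀ i, |f i| ≤ C) :
    Integrable f p :=
  ⟨hm.aestronglyMeasurable, HasFiniteIntegral.of_bounded
    (C := C) (Filter.Eventually.of_forall (by simpa [Real.norm_eq_abs] using hb))⟩

private lemma int_dot {I : Type*} [MeasurableSpace I] {p : Measure I} [IsFiniteMeasure p]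
    {d : ℕ} (M : Matrix (Fin d) (Fin d) ℝ) {v w : I → Fin d → ℝ}
    (hv : Measurable v) (hw : Measurable w) {Cv Cw : ℝ}
    (hbv : ∀ i a, |v i a| ≤ Cv) (hbw : ∀ i a, |w i a| ≤ Cw) :
    Integrable (fun i => v i ⬝ᵥ (M *ᵥ w i)) p :=
  integrable_of_bdd (meas_dot hv hw M) (fun i => dot_abs_le M (v i) (w i) (hbv i) (hbw i))

private lemma sqrt_add_le' {a b : ℝ} (ha : 0 ≤ a) (hb : 0 ≤ b) :
    Real.sqrt (a + b) ≤ Real.sqrt a + Real.sqrt b := by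
  have h : a + b ≤ (Real.sqrt a + Real.sqrt b) ^ 2 := by
    nlinarith [Real.sq_sqrt ha, Real.sq_sqrt hb, Real.sqrt_nonneg a, Real.sqrt_nonneg b]
  calc Real.sqrt (a + b) ≤ Real.sqrt ((Real.sqrt a + Real.sqrt b) ^ 2) := Real.sqrt_le_sqrt h
    _ = Real.sqrt a + Real.sqrt b := by
        rw [Real.sqrt_sq (by positivity)]

/-- Cauchy–Schwarz decoupling bound (core inequality of the paper's Propositions 3–6):
with `Σ = ∫ ψ ψᵀ dp`, `K(λ) = tr ((Σ + λ I_d)⁻¹ Σ)` and `‖u(i)‖₂ ≤ B`,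
`∫ |⟨ψ(i), u(i)⟩| dp(i) ≤ √(K(λ)·∫∫ ⟨u(i), ψ(j)⟩² dp(j) dp(i)) + B·√(λ·K(λ))`. -/
theorem stmt10 {I : Type*} [MeasurableSpace I] (p : Measure I) [IsProbabilityMeasure p]
    (d : ℕ) (ψ u : I → Fin d → ℝ) (hψmeas : Measurable ψ) (humeas : Measurable u)
    (hψbdd : ∃ C : ℝ, ∀ i a, |ψ i a| ≤ C)
    (B : ℝ) (hB : ∀ i, Real.sqrt (∑ a, (u i a) ^ 2) ≤ B)
    (S : Matrix (Fin d) (Fin d) ℝ) (hS : ∀ a b, S a b = ∫ i, ψ i a * ψ i b ∂p)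
    (lam : ℝ) (hlam : 0 < lam)
    (K : ℝ) (hK : K = Matrix.trace ((S + lam • (1 : Matrix (Fin d) (Fin d) ℝ))⁻¹ * S)) :
    ∫ i, |ψ i ⬝ᵥ u i| ∂p ≤
      Real.sqrt (K * ∫ i, (∫ j, (u i ⬝ᵥ ψ j) ^ 2 ∂p) ∂p) + B * Real.sqrt (lam * K) := by
  classical
  obtain ⟨C, hψC⟩ := hψbdd
  have hIne : Nonempty I := by
    by_contra h
    rw [not_nonempty_iff] at h
    have h1 : p Set.univ = 1 := measure_univ
    simp [Set.univ_eq_empty_iff.2 h] at h1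
  have hBnn : 0 ≤ B := (Real.sqrt_nonneg _).trans (hB (Classical.arbitrary I))
  -- coordinate bounds on u
  have huB : ∀ i a, |u i a| ≤ B := by
    intro i a
    calc |u i a| = Real.sqrt ((u i a) ^ 2) := (Real.sqrt_sq_eq_abs _).symm
      _ ≤ Real.sqrt (∑ b, (u i b) ^ 2) := by
          refine Real.sqrt_le_sqrt ?_
          exact Finset.single_le_sum (f := fun b => (u i b) ^ 2)
            (fun b _ => sq_nonneg _) (Finset.mem_univ a)
      _ ≤ B := hB i
  have hB2 : ∀ i, ∑ a, (u i a) ^ 2 ≤ B ^ 2 := by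
    intro i
    have h1 : (0:ℝ) ≤ ∑ a, (u i a) ^ 2 := Finset.sum_nonneg fun a _ => sq_nonneg _
    nlinarith [Real.sq_sqrt h1, hB i, Real.sqrt_nonneg (∑ a, (u i a) ^ 2)]
  -- coordinate measurability
  have hψa : ∀ a, Measurable fun i => ψ i a := fun a => (measurable_pi_apply a).comp hψmeas
  -- integrability of products of ψ-coordinates
  have hint_ab : ∀ a b, Integrable (fun i => ψ i a * ψ i b) p := by
    intro a b
    refine integrable_of_bdd ((hψa a).mul (hψa b)) (C := C * C) fun i => ?_
    rw [abs_mul]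
    exact mul_le_mul (hψC i a) (hψC i b) (abs_nonneg _) ((abs_nonneg _).trans (hψC i a))
  -- quadratic form of S
  have hquad : ∀ v : Fin d → ℝ, v ⬝ᵥ (S *ᵥ v) = ∫ i, (ψ i ⬝ᵥ v) ^ 2 ∂p := by
    intro v
    have hpt : ∀ i, (ψ i ⬝ᵥ v) ^ 2 = ∑ a, ∑ b, (v a * v b) * (ψ i a * ψ i b) := by
      intro i
      rw [sq, dotProduct, Finset.sum_mul_sum]
      exact Finset.sum_congr rfl fun a _ => Finset.sum_congr rfl fun b _ => by ring
    simp_rw [hpt]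
    rw [integral_finset_sum _ (fun a _ => integrable_finset_sum _
      (fun b _ => (hint_ab a b).const_mul _))]
    simp_rw [integral_finset_sum _ (fun b _ => (hint_ab _ b).const_mul _),
      integral_const_mul]
    simp only [dotProduct, Matrix.mulVec, Finset.mul_sum]
    exact Finset.sum_congr rfl fun a _ => Finset.sum_congr rfl fun b _ => by
      rw [← hS]; ring
  -- S is symmetric and PSD
  have hSsymm : ∀ a b, S a b = S b a := by
    intro a b; rw [hS, hS]; exact integral_congr_ae (Filter.Eventually.of_forall
      fun i => mul_comm _ _)
  have hSherm : S.IsHermitian := by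
    ext a b
    simp only [Matrix.conjTranspose_apply, star_trivial]
    exact hSsymm b a
  have hSpsd : S.PosSemidef := by
    refine Matrix.PosSemidef.of_dotProduct_mulVec_nonneg hSherm fun x => ?_
    have hsx : star x = x := by simp
    rw [hsx, hquad x]
    exact integral_nonneg fun i => sq_nonneg _
  set A := S + lam • (1 : Matrix (Fin d) (Fin d) ℝ) with hA
  have hlamPD : (lam • (1 : Matrix (Fin d) (Fin d) ℝ)).PosDef := by
    have hdiag : lam • (1 : Matrix (Fin d) (Fin d) ℝ)
        = Matrix.diagonal (fun _ => lam) := by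
      ext a b
      by_cases h : a = b <;> simp [h, Matrix.one_apply, Matrix.diagonal_apply]
    rw [hdiag]
    exact Matrix.posDef_diagonal_iff.2 fun _ => hlam
  have hApd : A.PosDef := Matrix.PosDef.posSemidef_add hSpsd hlamPD
  have hAdet : IsUnit A.det := hApd.det_pos.ne'.isUnit
  have hAinvsymm : A⁻¹ᵀ = A⁻¹ := by
    have h := hApd.inv.isHermitian
    rw [Matrix.IsHermitian, Matrix.conjTranspose_eq_transpose_of_trivial] at h
    exact h
  -- the two quadratic functionals
  set f : I → ℝ := fun i => ψ i ⬝ᵥ (A⁻¹ *ᵥ ψ i) with hf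
  set g : I → ℝ := fun i => u i ⬝ᵥ (A *ᵥ u i) with hg
  have hf0 : ∀ i, 0 ≤ f i := by
    intro i
    have h := hApd.inv.posSemidef.dotProduct_mulVec_nonneg (ψ i)
    simpa using h
  have hg0 : ∀ i, 0 ≤ g i := by
    intro i
    have h := hApd.posSemidef.dotProduct_mulVec_nonneg (u i)
    simpa using h
  -- pointwise Cauchy-Schwarz
  have hpointwise : ∀ i, |ψ i ⬝ᵥ u i| ≤ Real.sqrt (f i) * Real.sqrt (g i) := by
    intro i
    have hcs := psd_cs hApd.posSemidef (A⁻¹ *ᵥ ψ i) (u i)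
    have hAinv_mulVec : ∀ z : Fin d → ℝ, A⁻¹ *ᵥ z = z ᵥ* A⁻¹ := fun z => by
      rw [← hAinvsymm, Matrix.mulVec_transpose, hAinvsymm]
    have he1 : (A⁻¹ *ᵥ ψ i) ⬝ᵥ (A *ᵥ u i) = ψ i ⬝ᵥ u i := by
      rw [hAinv_mulVec, ← dotProduct_mulVec, Matrix.mulVec_mulVec,
        Matrix.nonsing_inv_mul _ hAdet, Matrix.one_mulVec]
    have he2 : (A⁻¹ *ᵥ ψ i) ⬝ᵥ (A *ᵥ (A⁻¹ *ᵥ ψ i)) = f i := by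
      rw [Matrix.mulVec_mulVec, Matrix.mul_nonsing_inv _ hAdet, Matrix.one_mulVec,
        hAinv_mulVec, ← dotProduct_mulVec]
    rw [he2, he1] at hcs
    calc |ψ i ⬝ᵥ u i| = Real.sqrt ((ψ i ⬝ᵥ u i) ^ 2) := (Real.sqrt_sq_eq_abs _).symm
      _ ≤ Real.sqrt (f i * g i) := Real.sqrt_le_sqrt hcs
      _ = Real.sqrt (f i) * Real.sqrt (g i) := Real.sqrt_mul (hf0 i) _
  -- bounds, measurability, integrability of f and g
  set Cf : ℝ := (∑ a, ∑ b, |A⁻¹ a b|) * C * C with hCf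
  set Cg : ℝ := (∑ a, ∑ b, |A a b|) * B * B with hCg
  have hfb : ∀ i, |f i| ≤ Cf := fun i => dot_abs_le A⁻¹ (ψ i) (ψ i) (hψC i) (hψC i)
  have hgb : ∀ i, |g i| ≤ Cg := fun i => dot_abs_le A (u i) (u i) (huB i) (huB i)
  have hfmeas : Measurable f := meas_dot hψmeas hψmeas A⁻¹
  have hgmeas : Measurable g := meas_dot humeas humeas A
  have hfint : Integrable f p := integrable_of_bdd hfmeas hfb
  have hgint : Integrable g p := integrable_of_bdd hgmeas hgb
  -- ∫ f = K
  have hKf : ∫ i, f i ∂p = K := by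
    have hpt : ∀ i, f i = ∑ a, ∑ b, A⁻¹ a b * (ψ i a * ψ i b) := by
      intro i
      simp only [hf, dotProduct, Matrix.mulVec, Finset.mul_sum]
      exact Finset.sum_congr rfl fun a _ => Finset.sum_congr rfl fun b _ => by ring
    simp_rw [hpt]
    rw [integral_finset_sum _ (fun a _ => integrable_finset_sum _
      (fun b _ => (hint_ab a b).const_mul (A⁻¹ a b)))]
    simp_rw [integral_finset_sum _ (fun b _ => (hint_ab _ b).const_mul _),
      integral_const_mul]
    rw [hK]
    simp only [Matrix.trace, Matrix.diag, Matrix.mul_apply]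
    exact Finset.sum_congr rfl fun a _ => Finset.sum_congr rfl fun b _ => by
      rw [← hS a b, hSsymm a b]
  have hK0 : 0 ≤ K := by rw [← hKf]; exact integral_nonneg hf0
  -- g decomposition
  have hgpt : ∀ i, g i = (∫ j, (u i ⬝ᵥ ψ j) ^ 2 ∂p) + lam * (∑ a, (u i a) ^ 2) := by
    intro i
    have h1 : g i = u i ⬝ᵥ (S *ᵥ u i) + lam * (u i ⬝ᵥ u i) := by
      simp only [hg, hA, Matrix.add_mulVec, dotProduct_add,
        Matrix.smul_mulVec, Matrix.one_mulVec, dotProduct_smul, smul_eq_mul]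
    rw [h1, hquad (u i)]
    congr 1
    · exact integral_congr_ae (Filter.Eventually.of_forall fun j =>
        show (ψ j ⬝ᵥ u i) ^ 2 = (u i ⬝ᵥ ψ j) ^ 2 by rw [dotProduct_comm])
    · simp [dotProduct, sq]
  have hXint : Integrable (fun i => ∫ j, (u i ⬝ᵥ ψ j) ^ 2 ∂p) p := by
    refine (int_dot S humeas humeas huB huB).congr (Filter.Eventually.of_forall fun i => ?_)
    show u i ⬝ᵥ (S *ᵥ u i) = ∫ j, (u i ⬝ᵥ ψ j) ^ 2 ∂p
    rw [hquad (u i)]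
    exact integral_congr_ae (Filter.Eventually.of_forall fun j =>
      show (ψ j ⬝ᵥ u i) ^ 2 = (u i ⬝ᵥ ψ j) ^ 2 by rw [dotProduct_comm])
  have husq_meas : Measurable fun i => ∑ a, (u i a) ^ 2 :=
    Finset.measurable_sum _ fun a _ => ((measurable_pi_apply a).comp humeas).pow_const 2
  have husq_nonneg : ∀ i, (0:ℝ) ≤ ∑ a, (u i a) ^ 2 :=
    fun i => Finset.sum_nonneg fun a _ => sq_nonneg _
  have husq_int : Integrable (fun i => ∑ a, (u i a) ^ 2) p :=
    integrable_of_bdd husq_meas (C := B ^ 2) fun i => by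
      rw [abs_of_nonneg (husq_nonneg i)]; exact hB2 i
  have hYint : Integrable (fun i => lam * ∑ a, (u i a) ^ 2) p := husq_int.const_mul lam
  set X := ∫ i, (∫ j, (u i ⬝ᵥ ψ j) ^ 2 ∂p) ∂p with hX
  have hgeq : ∫ i, g i ∂p = X + lam * ∫ i, (∑ a, (u i a) ^ 2) ∂p := by
    calc ∫ i, g i ∂p
        = ∫ i, ((∫ j, (u i ⬝ᵥ ψ j) ^ 2 ∂p) + lam * ∑ a, (u i a) ^ 2) ∂p :=
          integral_congr_ae (Filter.Eventually.of_forall hgpt)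
      _ = X + lam * ∫ i, (∑ a, (u i a) ^ 2) ∂p := by
          rw [integral_add hXint hYint, integral_const_mul]
  have hX0 : 0 ≤ X := integral_nonneg fun i => integral_nonneg fun j => sq_nonneg _
  have hYle : ∫ i, (∑ a, (u i a) ^ 2) ∂p ≤ B ^ 2 := by
    calc ∫ i, (∑ a, (u i a) ^ 2) ∂p ≤ ∫ _, B ^ 2 ∂p :=
          integral_mono husq_int (integrable_const _) hB2
      _ = B ^ 2 := by simp
  have hgle : ∫ i, g i ∂p ≤ X + lam * B ^ 2 := by
    rw [hgeq]
    have := mul_le_mul_of_nonneg_left hYle hlam.le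
    linarith
  -- Hölder's inequality with p = q = 2
  have hpq : Real.HolderConjugate 2 2 := Real.HolderConjugate.two_two
  have hsf : MemLp (fun i => Real.sqrt (f i)) (ENNReal.ofReal 2) p :=
    MemLp.of_bound hfmeas.sqrt.aestronglyMeasurable (Real.sqrt Cf)
      (Filter.Eventually.of_forall fun i => by
        rw [Real.norm_eq_abs, abs_of_nonneg (Real.sqrt_nonneg _)]
        exact Real.sqrt_le_sqrt ((le_abs_self _).trans (hfb i)))
  have hsg : MemLp (fun i => Real.sqrt (g i)) (ENNReal.ofReal 2) p :=
    MemLp.of_bound hgmeas.sqrt.aestronglyMeasurable (Real.sqrt Cg)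
      (Filter.Eventually.of_forall fun i => by
        rw [Real.norm_eq_abs, abs_of_nonneg (Real.sqrt_nonneg _)]
        exact Real.sqrt_le_sqrt ((le_abs_self _).trans (hgb i)))
  have hHolder := integral_mul_le_Lp_mul_Lq_of_nonneg hpq
    (f := fun i => Real.sqrt (f i)) (g := fun i => Real.sqrt (g i))
    (Filter.Eventually.of_forall fun i => Real.sqrt_nonneg _)
    (Filter.Eventually.of_forall fun i => Real.sqrt_nonneg _) hsf hsg
  have hrpow : ∀ x : ℝ, 0 ≤ x → Real.sqrt x ^ (2:ℝ) = x := fun x hx => by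
    rw [show (2:ℝ) = ((2:ℕ):ℝ) by norm_num, Real.rpow_natCast, Real.sq_sqrt hx]
  have e1 : ∫ i, (Real.sqrt (f i)) ^ (2:ℝ) ∂p = ∫ i, f i ∂p :=
    integral_congr_ae (Filter.Eventually.of_forall fun i => hrpow _ (hf0 i))
  have e2 : ∫ i, (Real.sqrt (g i)) ^ (2:ℝ) ∂p = ∫ i, g i ∂p :=
    integral_congr_ae (Filter.Eventually.of_forall fun i => hrpow _ (hg0 i))
  rw [e1, e2, ← Real.sqrt_eq_rpow, ← Real.sqrt_eq_rpow, hKf] at hHolder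
  -- put everything together
  have hstep1 : ∫ i, |ψ i ⬝ᵥ u i| ∂p ≤ ∫ i, Real.sqrt (f i) * Real.sqrt (g i) ∂p := by
    refine integral_mono ?_ ?_ hpointwise
    · exact ((int_dot (1 : Matrix (Fin d) (Fin d) ℝ) hψmeas humeas hψC huB).congr
        (Filter.Eventually.of_forall fun i => by simp [Matrix.one_mulVec])).abs
    · refine integrable_of_bdd (hfmeas.sqrt.mul hgmeas.sqrt)
        (C := Real.sqrt Cf * Real.sqrt Cg) fun i => ?_
      rw [abs_of_nonneg (mul_nonneg (Real.sqrt_nonneg _) (Real.sqrt_nonneg _))]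
      exact mul_le_mul (Real.sqrt_le_sqrt ((le_abs_self _).trans (hfb i)))
        (Real.sqrt_le_sqrt ((le_abs_self _).trans (hgb i)))
        (Real.sqrt_nonneg _) (Real.sqrt_nonneg _)
  calc ∫ i, |ψ i ⬝ᵥ u i| ∂p
      ≤ ∫ i, Real.sqrt (f i) * Real.sqrt (g i) ∂p := hstep1
    _ ≤ Real.sqrt K * Real.sqrt (∫ i, g i ∂p) := hHolder
    _ ≤ Real.sqrt K * Real.sqrt (X + lam * B ^ 2) :=
        mul_le_mul_of_nonneg_left (Real.sqrt_le_sqrt hgle) (Real.sqrt_nonneg _)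
    _ ≤ Real.sqrt K * (Real.sqrt X + Real.sqrt (lam * B ^ 2)) :=
        mul_le_mul_of_nonneg_left (sqrt_add_le' hX0 (by positivity)) (Real.sqrt_nonneg _)
    _ = Real.sqrt (K * X) + B * Real.sqrt (lam * K) := by
        rw [mul_add, ← Real.sqrt_mul hK0 X, Real.sqrt_mul hlam.le (B ^ 2),
          Real.sqrt_sq hBnn, Real.sqrt_mul hlam.le K]
        ring
end

section
/- Let M and M′ be two finite-horizon MDP models with the same finite state space S, finite action space A, and horizon H, given by reward functions R^h_M, R^h_{M′} : S×A → ℝ and transition kernels P^h_M(·|x,a), P^h_{M′}(·|x,a) ∈ Δ(S) for h ∈ {1,…,H}. Assume the optimal value functions satisfy V^h_M(x) ∈ [0,1] and V^h_{M′}(x) ∈ [0,1] for all h ∈ {1,…,H} and x ∈ S. Then for every state x ∈ S, |V¹_M(x) − V¹_{M′}(x)| ≤ H · max_{h ∈ {1,…,H}, x′ ∈ S, a ∈ A} ( |R^h_M(x′,a) − R^h_{M′}(x′,a)| + 2·TV( P^h_M(·|x′,a), P^h_{M′}(·|x′,a) ) ). -/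
open Finset

/-- Optimal value function of a finite-horizon MDP, defined by backward induction:
`optVal H R P h x` is `V^h(x)`, with `V^{H+1} ≡ 0`,
`Q^h(x,a) = R^h(x,a) + ∑_{x'} P^h(x'|x,a)·V^{h+1}(x')` and `V^h(x) = max_a Q^h(x,a)`. -/
noncomputable def optVal {S A : Type*} [Fintype S] [Fintype A] [Nonempty A]
    (H : ℕ) (R : ℕ → S → A → ℝ) (P : ℕ → S → A → S → ℝ) (h : ℕ) (x : S) : ℝ :=
  if hh : h < H + 1 then
    Finset.univ.sup' Finset.univ_nonempty
      (fun a : A => R h x a + ∑ x', P h x a x' * optVal H R P (h + 1) x')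
  else 0
termination_by H + 1 - h
decreasing_by omega

/-- Helper: the sup' of two functions differ by at most a pointwise bound. -/
lemma abs_sup'_sub_sup'_le' {A : Type*} (s : Finset A) (hs : s.Nonempty) (f g : A → ℝ)
    (C : ℝ) (hb : ∀ a ∈ s, |f a - g a| ≤ C) : |s.sup' hs f - s.sup' hs g| ≤ C := by
  rw [abs_sub_le_iff]
  constructor
  · obtain ⟨a, ha, hfa⟩ := s.exists_mem_eq_sup' hs f
    calc s.sup' hs f - s.sup' hs g ≤ f a - g a := by
          rw [hfa]; gcongr; exact Finset.le_sup' g ha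
      _ ≤ |f a - g a| := le_abs_self _
      _ ≤ C := hb a ha
  · obtain ⟨a, ha, hga⟩ := s.exists_mem_eq_sup' hs g
    calc s.sup' hs g - s.sup' hs f ≤ g a - f a := by
          rw [hga]; gcongr; exact Finset.le_sup' f ha
      _ ≤ |f a - g a| := by rw [abs_sub_comm]; exact le_abs_self _
      _ ≤ C := hb a ha

/-- The paper's Lemma (deltaV) core bound: for two finite-horizon MDP models `M, M'`
on the same finite state and action spaces with horizon `H`, whose optimal value
functions take values in `[0,1]` at every step `h ∈ {1,…,H}`, the optimal values at
step 1 satisfy, for every state `x`,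
`|V¹_M(x) − V¹_{M'}(x)| ≤ H · max_{h ∈ {1,…,H}, x', a} (|R^h_M(x',a) − R^h_{M'}(x',a)|
  + 2·TV(P^h_M(·|x',a), P^h_{M'}(·|x',a)))`,
with `TV(p,q) = (1/2)·∑_y |p(y) − q(y)|`. -/
theorem stmt15 {S A : Type*} [Fintype S] [Fintype A] [Nonempty S] [Nonempty A]
    (H : ℕ) (RM RM' : ℕ → S → A → ℝ) (pM pM' : ℕ → S → A → S → ℝ)
    (hpM : ∀ h x a, (∀ x', 0 ≤ pM h x a x') ∧ ∑ x', pM h x a x' = 1)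
    (hpM' : ∀ h x a, (∀ x', 0 ≤ pM' h x a x') ∧ ∑ x', pM' h x a x' = 1)
    (hVM : ∀ h ∈ Finset.Icc 1 H, ∀ x, optVal H RM pM h x ∈ Set.Icc (0 : ℝ) 1)
    (hVM' : ∀ h ∈ Finset.Icc 1 H, ∀ x, optVal H RM' pM' h x ∈ Set.Icc (0 : ℝ) 1) :
    ∀ x : S, |optVal H RM pM 1 x - optVal H RM' pM' 1 x| ≤
      (H : ℝ) * ⨆ h ∈ Finset.Icc 1 H, ⨆ x' : S, ⨆ a : A,
        (|RM h x' a - RM' h x' a| +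
          2 * ((1 / 2) * ∑ y, |pM h x' a y - pM' h x' a y|)) := by
  classical
  set g : ℕ → S → A → ℝ := fun h x' a =>
    |RM h x' a - RM' h x' a| + 2 * ((1 / 2) * ∑ y, |pM h x' a y - pM' h x' a y|) with hgdef
  set F : ℕ → ℝ := fun h => ⨆ _ : h ∈ Finset.Icc 1 H, ⨆ x' : S, ⨆ a : A, g h x' a with hFdef
  set ε : ℝ := ⨆ h, F h with hεdef
  have hg0 : ∀ h x a, 0 ≤ g h x a := by
    intro h x a
    have : 0 ≤ ∑ y, |pM h x a y - pM' h x a y| :=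
      Finset.sum_nonneg fun y _ => abs_nonneg _
    have := abs_nonneg (RM h x a - RM' h x a)
    simp only [hgdef]
    nlinarith
  have hbddA : ∀ h x, BddAbove (Set.range fun a : A => g h x a) := fun h x =>
    (Set.finite_range _).bddAbove
  have hbddS : ∀ h, BddAbove (Set.range fun x : S => ⨆ a : A, g h x a) := fun h =>
    (Set.finite_range _).bddAbove
  have hFval : ∀ h, F h = if h ∈ Finset.Icc 1 H then (⨆ x' : S, ⨆ a : A, g h x' a) else 0 := by
    intro h
    by_cases hh : h ∈ Finset.Icc 1 H
    · rw [if_pos hh, hFdef]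
      exact ciSup_pos hh
    · rw [if_neg hh, hFdef]
      simp [hh]
  have hFfin : (Set.range F).Finite := by
    apply Set.Finite.subset
      (((Finset.Icc 1 H).finite_toSet.image fun h => ⨆ x' : S, ⨆ a : A, g h x' a).insert 0)
    rintro y ⟨h, rfl⟩
    rw [hFval h]
    by_cases hh : h ∈ Finset.Icc 1 H
    · rw [if_pos hh]
      exact Set.mem_insert_of_mem _ ⟨h, hh, rfl⟩
    · rw [if_neg hh]; exact Set.mem_insert _ _
  have hbddF : BddAbove (Set.range F) := hFfin.bddAbove
  have hεle : ∀ h ∈ Finset.Icc 1 H, ∀ x a, g h x a ≤ ε := by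
    intro h hh x a
    have h1 : g h x a ≤ ⨆ a : A, g h x a := le_ciSup (hbddA h x) a
    have h2 : (⨆ a : A, g h x a) ≤ ⨆ x' : S, ⨆ a : A, g h x' a :=
      le_ciSup (hbddS h) x
    have h3 : (⨆ x' : S, ⨆ a : A, g h x' a) = F h := by rw [hFval h, if_pos hh]
    have h4 : F h ≤ ε := le_ciSup hbddF h
    linarith
  have hε0 : 0 ≤ ε := by
    have h4 : F 0 ≤ ε := le_ciSup hbddF 0
    have : F 0 = 0 := by rw [hFval 0, if_neg (by simp)]
    linarith
  -- key downward induction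
  have key : ∀ n : ℕ, ∀ h, H + 1 - h ≤ n → 1 ≤ h → ∀ x,
      |optVal H RM pM h x - optVal H RM' pM' h x| ≤ ((H + 1 - h : ℕ) : ℝ) * ε := by
    intro n
    induction n with
    | zero =>
      intro h hn h1 x
      have hh : ¬ h < H + 1 := by omega
      rw [optVal, optVal, dif_neg hh, dif_neg hh, sub_self, abs_zero]
      exact mul_nonneg (Nat.cast_nonneg _) hε0
    | succ n ih =>
      intro h hn h1 x
      by_cases hh : h < H + 1
      · have hhIcc : h ∈ Finset.Icc 1 H := by
          rw [Finset.mem_Icc]; omega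
        rw [optVal, optVal, dif_pos hh, dif_pos hh]
        apply abs_sup'_sub_sup'_le'
        intro a _
        -- bound |Q a - Q' a|
        have hV'bd : ∀ x', |optVal H RM' pM' (h + 1) x'| ≤ 1 := by
          intro x'
          by_cases hhH : h + 1 < H + 1
          · have := hVM' (h + 1) (by rw [Finset.mem_Icc]; omega) x'
            rw [abs_le]; exact ⟨by linarith [this.1], this.2⟩
          · rw [optVal, dif_neg hhH]; simp
        have hIH : ∀ x', |optVal H RM pM (h + 1) x' - optVal H RM' pM' (h + 1) x'| ≤
            ((H - h : ℕ) : ℝ) * ε := by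
          intro x'
          have := ih (h + 1) (by omega) (by omega) x'
          have hcast : H + 1 - (h + 1) = H - h := by omega
          rwa [hcast] at this
        have hsum :
            (∑ x', pM h x a x' * optVal H RM pM (h + 1) x') -
              (∑ x', pM' h x a x' * optVal H RM' pM' (h + 1) x') =
            (∑ x', (pM h x a x' - pM' h x a x') * optVal H RM' pM' (h + 1) x') +
              (∑ x', pM h x a x' *
                (optVal H RM pM (h + 1) x' - optVal H RM' pM' (h + 1) x')) := by
          rw [← Finset.sum_sub_distrib, ← Finset.sum_add_distrib]
          congr 1; ext x'; ring
        have hb1 : |∑ x', (pM h x a x' - pM' h x a x') * optVal H RM' pM' (h + 1) x'| ≤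
            ∑ y, |pM h x a y - pM' h x a y| := by
          calc _ ≤ ∑ x', |(pM h x a x' - pM' h x a x') * optVal H RM' pM' (h + 1) x'| :=
                Finset.abs_sum_le_sum_abs _ _
            _ ≤ ∑ y, |pM h x a y - pM' h x a y| := by
                apply Finset.sum_le_sum
                intro y _
                rw [abs_mul]
                calc |pM h x a y - pM' h x a y| * |optVal H RM' pM' (h + 1) y| ≤
                    |pM h x a y - pM' h x a y| * 1 :=
                      mul_le_mul_of_nonneg_left (hV'bd y) (abs_nonneg _)
                  _ = _ := mul_one _
        have hb2 : |∑ x', pM h x a x' *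
              (optVal H RM pM (h + 1) x' - optVal H RM' pM' (h + 1) x')| ≤
            ((H - h : ℕ) : ℝ) * ε := by
          calc _ ≤ ∑ x', |pM h x a x' *
                (optVal H RM pM (h + 1) x' - optVal H RM' pM' (h + 1) x')| :=
                Finset.abs_sum_le_sum_abs _ _
            _ ≤ ∑ x', pM h x a x' * (((H - h : ℕ) : ℝ) * ε) := by
                apply Finset.sum_le_sum
                intro y _
                rw [abs_mul, abs_of_nonneg ((hpM h x a).1 y)]
                exact mul_le_mul_of_nonneg_left (hIH y) ((hpM h x a).1 y)
            _ = ((H - h : ℕ) : ℝ) * ε := by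
                rw [← Finset.sum_mul, (hpM h x a).2, one_mul]
        have hgε : |RM h x a - RM' h x a| + ∑ y, |pM h x a y - pM' h x a y| ≤ ε := by
          have := hεle h hhIcc x a
          simp only [hgdef] at this
          linarith
        have hcast2 : ((H + 1 - h : ℕ) : ℝ) = ((H - h : ℕ) : ℝ) + 1 := by
          have : H + 1 - h = (H - h) + 1 := by omega
          rw [this]; push_cast; ring
        calc |(RM h x a + ∑ x', pM h x a x' * optVal H RM pM (h + 1) x') -
              (RM' h x a + ∑ x', pM' h x a x' * optVal H RM' pM' (h + 1) x')| ≤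
            |RM h x a - RM' h x a| +
              |(∑ x', pM h x a x' * optVal H RM pM (h + 1) x') -
                (∑ x', pM' h x a x' * optVal H RM' pM' (h + 1) x')| := by
              have := abs_add_le (RM h x a - RM' h x a)
                ((∑ x', pM h x a x' * optVal H RM pM (h + 1) x') -
                  (∑ x', pM' h x a x' * optVal H RM' pM' (h + 1) x'))
              calc _ = |(RM h x a - RM' h x a) +
                  ((∑ x', pM h x a x' * optVal H RM pM (h + 1) x') -
                    (∑ x', pM' h x a x' * optVal H RM' pM' (h + 1) x'))| := by ring_nf
                _ ≤ _ := this
          _ ≤ |RM h x a - RM' h x a| +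
              (|∑ x', (pM h x a x' - pM' h x a x') * optVal H RM' pM' (h + 1) x'| +
                |∑ x', pM h x a x' *
                  (optVal H RM pM (h + 1) x' - optVal H RM' pM' (h + 1) x')|) := by
              rw [hsum]
              gcongr
              exact abs_add_le _ _
          _ ≤ (|RM h x a - RM' h x a| + ∑ y, |pM h x a y - pM' h x a y|) +
              ((H - h : ℕ) : ℝ) * ε := by linarith
          _ ≤ ε + ((H - h : ℕ) : ℝ) * ε := by linarith
          _ = ((H + 1 - h : ℕ) : ℝ) * ε := by rw [hcast2]; ring
      · have hh' : ¬ h < H + 1 := hh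
        rw [optVal, optVal, dif_neg hh', dif_neg hh']
        simp [mul_nonneg (Nat.cast_nonneg _) hε0]
  intro x
  have := key (H + 1) 1 (by omega) le_rfl x
  have hcast : ((H + 1 - 1 : ℕ) : ℝ) = (H : ℝ) := by norm_num
  rw [hcast] at this
  exact this
end
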